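/- (Low-frequency oscillatory integral with cubic decay) There exist constants y₀ > 0 and C > 0, independent of μ, t and x, such that for all μ > 0, all t > 0 and all x ∈ ℝ, one has |∫_{|ξ| ≤ y₀/√μ} e^{i(tω_μ(ξ) + xξ)} dξ| ≤ C (μ t)^{−1/3}. -/

import Mathlib

open MeasureTheory Real

/-- The dispersion relation `ω_μ(ξ) = √(|ξ| tanh(√μ |ξ|) / √μ)`. -/
noncomputable def omegaWW (μ ξ : ℝ) : ℝ :=
  Real.sqrt (|ξ| * Real.tanh (Real.sqrt μ * |ξ|) / Real.sqrt μ)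


open MeasureTheory

/-!
For `ξ ≥ 0`, `ω_μ ξ = Ω(√μ ξ) / √μ` with `Ω y = √(y tanh y)`, and `Ω'' ≤ -Ω / cosh² ≤ -y / 3`
on `(0, 1/2]`, so on `[0, 1 / (2√μ)]` the phase `φ ξ = t ω_μ ξ + x ξ` has `φ'' ≲ -μ t ξ`.
On `[0, (μ t)^(-1/3)]` the integral is bounded by the length of the interval; beyond it
`|φ''| ≳ (μ t)^(2/3)`, and van der Corput's second derivative test gives `(μ t)^(-1/3)` again.
The half `ξ ≤ 0` is the same integral with `x` replaced by `-x`.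
-/

open Set intervalIntegral

theorem norm_integral_cexp_I_mul_le_sub {φ : ℝ → ℝ} {a b : ℝ} (hab : a ≤ b) :
    ‖∫ x in a..b, Complex.exp (Complex.I * φ x)‖ ≤ b - a := by
  have := norm_integral_le_of_norm_le_const (a := a) (b := b) (C := 1)
    fun x _ ↦ (Complex.norm_exp_I_mul_ofReal (φ x)).le
  rwa [one_mul, abs_of_nonneg (sub_nonneg.2 hab)] at this

theorem intervalIntegrable_cexp_I_mul {φ : ℝ → ℝ} {a b : ℝ} (hφ : ContinuousOn φ (uIcc a b)) :
    IntervalIntegrable (fun x ↦ Complex.exp (Complex.I * φ x)) volume a b :=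
  (Complex.continuous_exp.comp_continuousOn
    (continuousOn_const.mul (Complex.continuous_ofReal.comp_continuousOn hφ))).intervalIntegrable

/-- Integrate `e^{iφ} = (φ')⁻¹ • (-i e^{iφ})'` by parts. -/
theorem norm_integral_cexp_I_mul_le_of_hasDerivAt_inv {φ φ' u' : ℝ → ℝ} {a b : ℝ} (hab : a ≤ b)
    (hφ : ∀ x ∈ Icc a b, HasDerivAt φ (φ' x) x) (hφ'c : ContinuousOn φ' (Icc a b))
    (hne : ∀ x ∈ Icc a b, φ' x ≠ 0)
    (hu : ∀ x ∈ Icc a b, HasDerivAt (fun x ↦ (φ' x)⁻¹) (u' x) x)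
    (hu' : IntervalIntegrable u' volume a b) :
    ‖∫ x in a..b, Complex.exp (Complex.I * φ x)‖ ≤
      |(φ' b)⁻¹| + |(φ' a)⁻¹| + ∫ x in a..b, |u' x| := by
  set e : ℝ → ℂ := fun x ↦ Complex.exp (Complex.I * φ x)
  have he' : ∀ x ∈ Icc a b, HasDerivAt e (Complex.I * φ' x * e x) x := fun x hx ↦
    ((hφ x hx).ofReal_comp.const_mul Complex.I).cexp.congr_deriv (mul_comm _ _)
  have hv : ∀ x ∈ Icc a b, HasDerivAt (fun x ↦ -Complex.I * e x) (φ' x * e x) x := fun x hx ↦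
    ((he' x hx).const_mul (-Complex.I)).congr_deriv (by ring_nf; rw [Complex.I_sq]; ring)
  have hv' : IntervalIntegrable (fun x ↦ (φ' x : ℂ) * e x) volume a b := by
    refine ContinuousOn.intervalIntegrable ?_
    rw [uIcc_of_le hab]
    exact (Complex.continuous_ofReal.comp_continuousOn hφ'c).mul
      fun x hx ↦ (he' x hx).continuousAt.continuousWithinAt
  have hparts := integral_smul_deriv_eq_deriv_smul (fun x hx ↦ hu x (uIcc_of_le hab ▸ hx))
    (fun x hx ↦ hv x (uIcc_of_le hab ▸ hx)) hu' hv'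
  have he : ∫ x in a..b, e x = ∫ x in a..b, (φ' x)⁻¹ • ((φ' x : ℂ) * e x) :=
    integral_congr fun x hx ↦ by
      rw [Complex.real_smul, ← mul_assoc, Complex.ofReal_inv,
        inv_mul_cancel₀ (Complex.ofReal_ne_zero.2 (hne x (uIcc_of_le hab ▸ hx))), one_mul]
  have hnorm : ∀ r x, ‖r • (-Complex.I * e x)‖ = |r| := fun r x ↦ by
    rw [norm_smul, norm_mul, norm_neg, Complex.norm_I, Complex.norm_exp_I_mul_ofReal,
      Real.norm_eq_abs, one_mul, mul_one]
  rw [he, hparts, ← hnorm _ b, ← hnorm _ a]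
  refine (norm_sub_le _ _).trans (add_le_add (norm_sub_le _ _) ?_)
  exact norm_integral_le_of_norm_le hab (ae_of_all _ fun x _ ↦ (hnorm _ x).le) hu'.abs

/-- Van der Corput's first derivative test. -/
theorem norm_integral_cexp_I_mul_le_of_le_abs_deriv {φ φ' φ'' : ℝ → ℝ} {a b ρ : ℝ}
    (hab : a ≤ b) (hρ : 0 < ρ)
    (hφ : ∀ x ∈ Icc a b, HasDerivAt φ (φ' x) x)
    (hφ' : ∀ x ∈ Icc a b, HasDerivAt φ' (φ'' x) x)
    (hφ'' : ∀ x ∈ Icc a b, φ'' x ≤ 0)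
    (hρφ' : ∀ x ∈ Icc a b, ρ ≤ |φ' x|) :
    ‖∫ x in a..b, Complex.exp (Complex.I * φ x)‖ ≤ 4 / ρ := by
  have hne : ∀ x ∈ Icc a b, φ' x ≠ 0 := fun x hx h ↦ by
    have := hρφ' x hx; rw [h, abs_zero] at this; linarith
  have hinv_le : ∀ x ∈ Icc a b, |(φ' x)⁻¹| ≤ 1 / ρ := fun x hx ↦ by
    rw [abs_inv, one_div]; exact inv_anti₀ hρ (hρφ' x hx)
  have hu : ∀ x ∈ Icc a b, HasDerivAt (fun x ↦ (φ' x)⁻¹) (-φ'' x / φ' x ^ 2) x :=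
    fun x hx ↦ (hφ' x hx).inv (hne x hx)
  have hu_nonneg : ∀ x ∈ Icc a b, 0 ≤ -φ'' x / φ' x ^ 2 :=
    fun x hx ↦ div_nonneg (neg_nonneg.2 (hφ'' x hx)) (sq_nonneg _)
  have hu' : IntervalIntegrable (fun x ↦ -φ'' x / φ' x ^ 2) volume a b := by
    refine intervalIntegrable_deriv_of_nonneg (g := fun x ↦ (φ' x)⁻¹)
      (fun x hx ↦ (hu x (uIcc_of_le hab ▸ hx)).continuousAt.continuousWithinAt) ?_ ?_
    all_goals rw [min_eq_left hab, max_eq_right hab]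
    exacts [fun x hx ↦ hu x (Ioo_subset_Icc_self hx),
      fun x hx ↦ hu_nonneg x (Ioo_subset_Icc_self hx)]
  have hb := right_mem_Icc.2 hab
  have ha := left_mem_Icc.2 hab
  refine (norm_integral_cexp_I_mul_le_of_hasDerivAt_inv hab hφ
    (fun x hx ↦ (hφ' x hx).continuousAt.continuousWithinAt) hne hu hu').trans ?_
  calc _ = |(φ' b)⁻¹| + |(φ' a)⁻¹| + ((φ' b)⁻¹ - (φ' a)⁻¹) := by
        rw [← integral_eq_sub_of_hasDerivAt (fun x hx ↦ hu x (uIcc_of_le hab ▸ hx)) hu']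
        congr 1
        exact integral_congr fun x hx ↦ abs_of_nonneg (hu_nonneg x (uIcc_of_le hab ▸ hx))
    _ ≤ 2 * (|(φ' b)⁻¹| + |(φ' a)⁻¹|) := by
        linarith [le_abs_self (φ' b)⁻¹, neg_abs_le (φ' a)⁻¹]
    _ ≤ 2 * (1 / ρ + 1 / ρ) := by gcongr; exacts [hinv_le b hb, hinv_le a ha]
    _ = 4 / ρ := by ring

/-- `c` is a zero of `ψ` if there is one, otherwise the endpoint where `|ψ|` is smallest. -/
theorem exists_mul_abs_sub_le_abs_of_deriv_le {ψ ψ' : ℝ → ℝ} {a b m : ℝ} (hab : a ≤ b)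
    (hψ : ∀ x ∈ Icc a b, HasDerivAt ψ (ψ' x) x) (hψ' : ∀ x ∈ Icc a b, ψ' x ≤ -m) :
    ∃ c ∈ Icc a b, ∀ x ∈ Icc a b, m * |x - c| ≤ |ψ x| := by
  have hcont : ContinuousOn ψ (Icc a b) := fun x hx ↦ (hψ x hx).continuousAt.continuousWithinAt
  have hslope : ∀ x ∈ Icc a b, ∀ y ∈ Icc a b, x ≤ y → ψ y - ψ x ≤ -m * (y - x) := by
    refine (convex_Icc a b).image_sub_le_mul_sub_of_deriv_le hcont
      (fun x hx ↦ (hψ x (interior_subset hx)).differentiableAt.differentiableWithinAt)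
      fun x hx ↦ ?_
    rw [(hψ x (interior_subset hx)).deriv]
    exact hψ' x (interior_subset hx)
  suffices ∃ c ∈ Icc a b, (ψ c ≤ 0 ∨ c = b) ∧ (0 ≤ ψ c ∨ c = a) by
    obtain ⟨c, hc, hright, hleft⟩ := this
    refine ⟨c, hc, fun x hx ↦ ?_⟩
    rcases le_total c x with hcx | hxc
    · have hdrop := hslope c hc x hx hcx
      rcases hright with h | rfl
      · rw [abs_of_nonneg (sub_nonneg.2 hcx)]
        exact le_trans (by linarith) (neg_le_abs (ψ x))
      · rw [le_antisymm hx.2 hcx, sub_self, abs_zero, mul_zero]; exact abs_nonneg _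
    · have hdrop := hslope x hx c hc hxc
      rcases hleft with h | rfl
      · rw [abs_of_nonpos (sub_nonpos.2 hxc)]
        exact le_trans (by linarith) (le_abs_self (ψ x))
      · rw [le_antisymm hxc hx.1, sub_self, abs_zero, mul_zero]; exact abs_nonneg _
  by_cases ha : ψ a ≤ 0
  · exact ⟨a, left_mem_Icc.2 hab, Or.inl ha, Or.inr rfl⟩
  by_cases hb : 0 ≤ ψ b
  · exact ⟨b, right_mem_Icc.2 hab, Or.inr rfl, Or.inl hb⟩
  obtain ⟨c, hc, hψc⟩ := intermediate_value_Icc' hab hcont ⟨(not_le.1 hb).le, (not_le.1 ha).le⟩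
  exact ⟨c, hc, Or.inl hψc.le, Or.inl hψc.ge⟩

theorem norm_integral_le_norm_add_norm_add_norm {E : Type*} [NormedAddCommGroup E] [NormedSpace ℝ E]
    {f : ℝ → E} {a p q b : ℝ} (hap : a ≤ p) (hpq : p ≤ q) (hqb : q ≤ b)
    (hf : IntervalIntegrable f volume a b) :
    ‖∫ x in a..b, f x‖ ≤ ‖∫ x in a..p, f x‖ + ‖∫ x in p..q, f x‖ + ‖∫ x in q..b, f x‖ := by
  have hsub : ∀ u v, u ∈ Icc a b → v ∈ Icc a b → IntervalIntegrable f volume u v :=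
    fun u v hu hv ↦ hf.mono_set <| by
      rw [uIcc_of_le (hap.trans (hpq.trans hqb))]; exact uIcc_subset_Icc hu hv
  have hp : p ∈ Icc a b := ⟨hap, hpq.trans hqb⟩
  have hq : q ∈ Icc a b := ⟨hap.trans hpq, hqb⟩
  have ha : a ∈ Icc a b := ⟨le_rfl, hp.2.trans' hap⟩
  have hb : b ∈ Icc a b := ⟨hq.1.trans hqb, le_rfl⟩
  rw [← integral_add_adjacent_intervals (hsub a q ha hq) (hsub q b hq hb),
    ← integral_add_adjacent_intervals (hsub a p ha hp) (hsub p q hp hq)]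
  exact (norm_add_le _ _).trans (add_le_add_left (norm_add_le _ _) _)

/-- Van der Corput's second derivative test: outside a window of width `2 / ρ` around the point
where `|φ'|` is smallest, `|φ'| ≥ ρ` and the first derivative test applies. -/
theorem norm_integral_cexp_I_mul_le_of_deriv2_le {φ φ' φ'' : ℝ → ℝ} {a b ρ : ℝ}
    (hab : a ≤ b) (hρ : 0 < ρ)
    (hφ : ∀ x ∈ Icc a b, HasDerivAt φ (φ' x) x)
    (hφ' : ∀ x ∈ Icc a b, HasDerivAt φ' (φ'' x) x)
    (hφ'' : ∀ x ∈ Icc a b, φ'' x ≤ -ρ ^ 2) :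
    ‖∫ x in a..b, Complex.exp (Complex.I * φ x)‖ ≤ 10 / ρ := by
  obtain ⟨c, hc, hfar⟩ := exists_mul_abs_sub_le_abs_of_deriv_le hab hφ' hφ''
  set δ := ρ⁻¹
  have hδ : 0 < δ := inv_pos.2 hρ
  have hpiece : ∀ u v, a ≤ u → u ≤ v → v ≤ b → (u = v ∨ ∀ x ∈ Icc u v, δ ≤ |x - c|) →
      ‖∫ x in u..v, Complex.exp (Complex.I * φ x)‖ ≤ 4 / ρ := by
    rintro u v hau huv hvb (rfl | hδle)
    · rw [integral_same, norm_zero]; positivity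
    have hsub : Icc u v ⊆ Icc a b := Icc_subset_Icc hau hvb
    refine norm_integral_cexp_I_mul_le_of_le_abs_deriv huv hρ (fun x hx ↦ hφ x (hsub hx))
      (fun x hx ↦ hφ' x (hsub hx)) (fun x hx ↦ (hφ'' x (hsub hx)).trans (by nlinarith))
      fun x hx ↦ ?_
    calc ρ = ρ ^ 2 * δ := by rw [sq, mul_assoc, mul_inv_cancel₀ hρ.ne', mul_one]
      _ ≤ ρ ^ 2 * |x - c| := by gcongr; exact hδle x hx
      _ ≤ |φ' x| := hfar x (hsub hx)
  set p := max a (c - δ)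
  set q := min b (c + δ)
  have hap : a ≤ p := le_max_left _ _
  have hpq : p ≤ q :=
    max_le (le_min hab (by linarith [hc.1])) (le_min (by linarith [hc.2]) (by linarith))
  have hqb : q ≤ b := min_le_left _ _
  have hleft : ‖∫ x in a..p, Complex.exp (Complex.I * φ x)‖ ≤ 4 / ρ := by
    refine hpiece a p le_rfl hap (hpq.trans hqb) ?_
    rcases le_total (c - δ) a with h | h
    · exact Or.inl (max_eq_left h).symm
    · refine Or.inr fun x hx ↦ ?_
      rw [abs_sub_comm]
      exact le_trans (by linarith [hx.2, max_eq_right h]) (le_abs_self _)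
  have hright : ‖∫ x in q..b, Complex.exp (Complex.I * φ x)‖ ≤ 4 / ρ := by
    refine hpiece q b (hap.trans hpq) hqb le_rfl ?_
    rcases le_total b (c + δ) with h | h
    · exact Or.inl (min_eq_left h)
    · exact Or.inr fun x hx ↦ le_trans (by linarith [hx.1, min_eq_right h]) (le_abs_self _)
  have hmiddle : ‖∫ x in p..q, Complex.exp (Complex.I * φ x)‖ ≤ 2 / ρ := by
    refine (norm_integral_cexp_I_mul_le_sub hpq).trans ?_
    have : q - p ≤ (c + δ) - (c - δ) := sub_le_sub (min_le_right _ _) (le_max_right _ _)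
    linarith [show 2 / ρ = 2 * δ by ring]
  calc _ ≤ _ := norm_integral_le_norm_add_norm_add_norm hap hpq hqb (intervalIntegrable_cexp_I_mul
        fun x hx ↦ (hφ x (uIcc_of_le hab ▸ hx)).continuousAt.continuousWithinAt)
    _ ≤ 4 / ρ + 2 / ρ + 4 / ρ := add_le_add (add_le_add hleft hmiddle) hright
    _ = 10 / ρ := by ring

/-- Where `φ'' ≤ -s³ x` degenerates near `0`, bound `[0, 1/s]` trivially and apply the second
derivative test with `|φ''| ≥ s²` on the rest. -/
theorem norm_integral_cexp_I_mul_le_of_deriv2_le_neg_mul {φ φ' φ'' : ℝ → ℝ} {L s : ℝ}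
    (hL : 0 ≤ L) (hs : 0 < s) (hφc : ContinuousOn φ (Icc 0 L))
    (hφ : ∀ x ∈ Ioc 0 L, HasDerivAt φ (φ' x) x)
    (hφ' : ∀ x ∈ Ioc 0 L, HasDerivAt φ' (φ'' x) x)
    (hφ'' : ∀ x ∈ Ioc 0 L, φ'' x ≤ -(s ^ 3 * x)) :
    ‖∫ x in 0..L, Complex.exp (Complex.I * φ x)‖ ≤ 11 / s := by
  set δ := s⁻¹
  have hδ : 0 < δ := inv_pos.2 hs
  rcases le_total L δ with hLδ | hδL
  · exact (norm_integral_cexp_I_mul_le_sub hL).trans (by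
      rw [div_eq_mul_inv]; linarith)
  have hsub : Icc δ L ⊆ Ioc 0 L := fun x hx ↦ ⟨hδ.trans_le hx.1, hx.2⟩
  have hfar : ‖∫ x in δ..L, Complex.exp (Complex.I * φ x)‖ ≤ 10 / s := by
    refine norm_integral_cexp_I_mul_le_of_deriv2_le hδL hs (fun x hx ↦ hφ x (hsub hx))
      (fun x hx ↦ hφ' x (hsub hx)) fun x hx ↦ (hφ'' x (hsub hx)).trans ?_
    calc -(s ^ 3 * x) ≤ -(s ^ 3 * δ) := by gcongr; exact hx.1
      _ = -s ^ 2 := by rw [pow_succ, mul_assoc, mul_inv_cancel₀ hs.ne', mul_one]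
  have hint : ∀ u v, u ∈ Icc 0 L → v ∈ Icc 0 L →
      IntervalIntegrable (fun x ↦ Complex.exp (Complex.I * φ x)) volume u v := fun u v hu hv ↦
    intervalIntegrable_cexp_I_mul (hφc.mono (uIcc_subset_Icc hu hv))
  rw [← integral_add_adjacent_intervals (hint 0 δ (left_mem_Icc.2 hL) ⟨hδ.le, hδL⟩)
    (hint δ L ⟨hδ.le, hδL⟩ (right_mem_Icc.2 hL))]
  calc _ ≤ _ := norm_add_le _ _
    _ ≤ δ + 10 / s :=
        add_le_add ((norm_integral_cexp_I_mul_le_sub hδ.le).trans_eq (sub_zero δ)) hfar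
    _ = 11 / s := by rw [div_eq_mul_inv, div_eq_mul_inv]; ring

theorem Real.hasDerivAt_tanh (y : ℝ) : HasDerivAt tanh (1 / cosh y ^ 2) y := by
  have h := (hasDerivAt_sinh y).div (hasDerivAt_cosh y) (cosh_pos y).ne'
  rw [show sinh / cosh = tanh from funext fun y ↦ (tanh_eq_sinh_div_cosh y).symm] at h
  refine h.congr_deriv ?_
  rw [← cosh_sq_sub_sinh_sq y]
  ring

@[fun_prop]
theorem Real.continuous_tanh : Continuous tanh :=
  continuous_iff_continuousAt.2 fun y ↦ (hasDerivAt_tanh y).continuousAt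

theorem HasDerivAt.div_two_mul_sqrt {g g' : ℝ → ℝ} {g'' y : ℝ} (hg : HasDerivAt g (g' y) y)
    (hg' : HasDerivAt g' g'' y) (hy : 0 < g y) :
    HasDerivAt (fun x ↦ g' x / (2 * √(g x)))
      ((2 * g y * g'' - g' y ^ 2) / (4 * g y * √(g y))) y := by
  refine (hg'.div ((hg.sqrt hy.ne').const_mul 2) (by positivity)).congr_deriv ?_
  field_simp
  rw [sq_sqrt hy.le]
  ring

/-- `ω_1` on `[0, ∞)`. -/
noncomputable def sqrtMulTanh (y : ℝ) : ℝ := √(y * tanh y)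

@[fun_prop]
theorem continuous_sqrtMulTanh : Continuous sqrtMulTanh :=
  continuous_sqrt.comp (continuous_id.mul continuous_tanh)

theorem omegaWW_eq_sqrtMulTanh {μ : ℝ} (hμ : 0 < μ) (ξ : ℝ) :
    omegaWW μ ξ = sqrtMulTanh (√μ * |ξ|) / √μ := by
  rw [omegaWW, sqrtMulTanh, ← sqrt_div' _ hμ.le]
  congr 1
  field_simp
  rw [sq_sqrt hμ.le]
  ring

theorem hasDerivAt_mul_tanh (y : ℝ) :
    HasDerivAt (fun y ↦ y * tanh y) (tanh y + y / cosh y ^ 2) y :=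
  ((hasDerivAt_id y).mul (hasDerivAt_tanh y)).congr_deriv (by simp [div_eq_mul_inv])

theorem hasDerivAt_tanh_add_div_cosh_sq (y : ℝ) :
    HasDerivAt (fun y ↦ tanh y + y / cosh y ^ 2) (2 * (1 - y * tanh y) / cosh y ^ 2) y := by
  have hc : cosh y ≠ 0 := (cosh_pos y).ne'
  refine ((hasDerivAt_tanh y).add ((hasDerivAt_id y).div ((hasDerivAt_cosh y).fun_pow 2)
    (pow_ne_zero 2 hc))).congr_deriv ?_
  rw [tanh_eq_sinh_div_cosh, id]
  field_simp
  ring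

/-- With `f y = y tanh y`, `Ω'' = (2 f f'' - f'²) / (4 f √f)`, and the numerator is
`-(tanh y - y / cosh² y)² - 4 f² / cosh² y`. -/
theorem exists_hasDerivAt_sqrtMulTanh : ∃ Ω' Ω'' : ℝ → ℝ, ∀ y > 0,
    HasDerivAt sqrtMulTanh (Ω' y) y ∧ HasDerivAt Ω' (Ω'' y) y ∧
      Ω'' y ≤ -(sqrtMulTanh y / cosh y ^ 2) := by
  set f : ℝ → ℝ := fun y ↦ y * tanh y
  set f' : ℝ → ℝ := fun y ↦ tanh y + y / cosh y ^ 2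
  refine ⟨fun y ↦ f' y / (2 * √(f y)), fun y ↦ (2 * f y * (2 * (1 - y * tanh y) / cosh y ^ 2)
    - f' y ^ 2) / (4 * f y * √(f y)), fun y hy ↦ ?_⟩
  have hf : 0 < f y := mul_pos hy (by
    rw [tanh_eq_sinh_div_cosh]; exact div_pos (sinh_pos_iff.2 hy) (cosh_pos y))
  refine ⟨(hasDerivAt_mul_tanh y).sqrt hf.ne',
    (hasDerivAt_mul_tanh y).div_two_mul_sqrt (hasDerivAt_tanh_add_div_cosh_sq y) hf, ?_⟩
  set r := √(f y)
  have hfr : f y = r ^ 2 := (sq_sqrt hf.le).symm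
  have hnum : 2 * f y * (2 * (1 - y * tanh y) / cosh y ^ 2) - f' y ^ 2
      ≤ -(4 * f y ^ 2 / cosh y ^ 2) := by
    have : 2 * f y * (2 * (1 - y * tanh y) / cosh y ^ 2) - f' y ^ 2
        = -(tanh y - y / cosh y ^ 2) ^ 2 - 4 * f y ^ 2 / cosh y ^ 2 := by
      simp only [f, f']; ring
    rw [this]; linarith [sq_nonneg (tanh y - y / cosh y ^ 2)]
  change _ / (4 * f y * r) ≤ -(r / cosh y ^ 2)
  rw [div_le_iff₀ (by positivity)]
  calc _ ≤ -(4 * f y ^ 2 / cosh y ^ 2) := hnum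
    _ = -(r / cosh y ^ 2) * (4 * f y * r) := by rw [hfr]; field_simp

theorem div_three_le_sqrtMulTanh_div_cosh_sq {y : ℝ} (hy : 0 ≤ y) (hy' : y ≤ 1 / 2) :
    y / 3 ≤ sqrtMulTanh y / cosh y ^ 2 := by
  have hc : 1 ≤ cosh y := one_le_cosh y
  have hcube : cosh y ^ 3 ≤ 3 := by
    calc cosh y ^ 3 ≤ exp (y ^ 2 / 2) ^ 3 := by gcongr; exact cosh_le_exp_half_sq y
      _ = exp (3 * (y ^ 2 / 2)) := by rw [← exp_nat_mul]; norm_num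
      _ ≤ exp 1 := exp_le_exp.2 (by nlinarith)
      _ ≤ 3 := exp_one_lt_three.le
  have hlow : y / cosh y ≤ sqrtMulTanh y := by
    refine le_sqrt_of_sq_le ?_
    rw [tanh_eq_sinh_div_cosh, div_pow, ← mul_div_assoc, div_le_div_iff₀ (by positivity)
      (by positivity)]
    have hs := self_le_sinh_iff.2 hy
    nlinarith [mul_le_mul_of_nonneg_left hs (by positivity : 0 ≤ y * cosh y),
      mul_le_mul_of_nonneg_left hc (by positivity : 0 ≤ y * sinh y * cosh y)]
  calc y / 3 ≤ y / cosh y ^ 3 := by gcongr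
    _ = y / cosh y / cosh y ^ 2 := by ring
    _ ≤ sqrtMulTanh y / cosh y ^ 2 := by gcongr

/-- On `0 < ξ ≤ 1 / (2√μ)` the phase satisfies `φ'' ≤ -μ t ξ / 3 ≤ -s³ ξ`. -/
theorem norm_integral_cexp_omegaWW_le_of_pow_three_le {μ t s : ℝ} (hμ : 0 < μ) (hs : 0 < s)
    (hst : s ^ 3 ≤ μ * t / 3) (x : ℝ) :
    ‖∫ ξ in 0..(1 / 2) / √μ, Complex.exp (Complex.I * ((t * omegaWW μ ξ + x * ξ : ℝ) : ℂ))‖ ≤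
      11 / s := by
  obtain ⟨Ω', Ω'', hΩ⟩ := exists_hasDerivAt_sqrtMulTanh
  set c := √μ
  have hc : 0 < c := sqrt_pos.2 hμ
  have ht : 0 < t := pos_of_mul_pos_right (by linarith [pow_pos hs 3]) hμ.le
  have hpos : ∀ ξ ∈ Ioc 0 ((1 / 2) / c), 0 < c * ξ := fun ξ hξ ↦ mul_pos hc hξ.1
  have hlin : ∀ ξ, HasDerivAt (fun ξ ↦ c * ξ) c ξ := fun ξ ↦ by
    simpa using (hasDerivAt_id ξ).const_mul c
  have hintegrand : ∀ ξ ∈ uIcc 0 ((1 / 2) / c), t * omegaWW μ ξ + x * ξ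
      = t * (sqrtMulTanh (c * ξ) / c) + x * ξ := fun ξ hξ ↦ by
    rw [uIcc_of_le (by positivity)] at hξ
    rw [omegaWW_eq_sqrtMulTanh hμ, abs_of_nonneg hξ.1]
  rw [integral_congr fun ξ hξ ↦ by rw [hintegrand ξ hξ]]
  refine norm_integral_cexp_I_mul_le_of_deriv2_le_neg_mul
    (φ' := fun ξ ↦ t * Ω' (c * ξ) + x) (φ'' := fun ξ ↦ t * c * Ω'' (c * ξ)) (by positivity) hs
    (Continuous.continuousOn (by fun_prop (disch := exact hc.ne')))
    (fun ξ hξ ↦ (((((hΩ _ (hpos ξ hξ)).1.comp ξ (hlin ξ)).div_const c).const_mul t).add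
      ((hasDerivAt_id ξ).const_mul x)).congr_deriv (by field_simp))
    (fun ξ hξ ↦ ((((hΩ _ (hpos ξ hξ)).2.1.comp ξ (hlin ξ)).const_mul t).add_const x).congr_deriv
      (by ring)) fun ξ hξ ↦ ?_
  have hcξ : c * ξ ≤ 1 / 2 := (le_div_iff₀' hc).1 hξ.2
  calc t * c * Ω'' (c * ξ) ≤ t * c * -(c * ξ / 3) := by
        gcongr
        exact (hΩ _ (hpos ξ hξ)).2.2.trans
          (neg_le_neg (div_three_le_sqrtMulTanh_div_cosh_sq (hpos ξ hξ).le hcξ))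
    _ = -(μ * t / 3 * ξ) := by rw [← sq_sqrt hμ.le]; ring
    _ ≤ -(s ^ 3 * ξ) := by gcongr; exact hξ.1.le

theorem norm_integral_cexp_omegaWW_le {μ t : ℝ} (hμ : 0 < μ) (ht : 0 < t) (x : ℝ) :
    ‖∫ ξ in 0..(1 / 2) / √μ, Complex.exp (Complex.I * ((t * omegaWW μ ξ + x * ξ : ℝ) : ℂ))‖ ≤
      22 * (μ * t) ^ (-(1:ℝ) / 3) := by
  have hμt : 0 < μ * t := mul_pos hμ ht
  set r := (μ * t) ^ (1 / 3 : ℝ)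
  have hr3 : r ^ 3 = μ * t := by
    rw [← rpow_natCast, ← rpow_mul hμt.le]; norm_num
  calc _ ≤ 11 / (r / 2) := norm_integral_cexp_omegaWW_le_of_pow_three_le hμ (by positivity)
        (by rw [div_pow, hr3]; linarith) x
    _ = 22 * r⁻¹ := by field_simp; norm_num
    _ = 22 * (μ * t) ^ (-(1:ℝ) / 3) := by rw [neg_div, rpow_neg hμt.le]

theorem omegaWW_neg (μ ξ : ℝ) : omegaWW μ (-ξ) = omegaWW μ ξ := by
  rw [omegaWW, omegaWW, abs_neg]

@[fun_prop]
theorem continuous_omegaWW (μ : ℝ) : Continuous (omegaWW μ) := by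
  unfold omegaWW
  fun_prop

/-- Low-frequency oscillatory integral with cubic decay. -/
theorem low_frequency_oscillatory_integral_cubic_decay :
    ∃ y₀ > 0, ∃ C > 0, ∀ μ > 0, ∀ t > 0, ∀ x : ℝ,
      ‖∫ ξ in Set.Icc (-(y₀ / Real.sqrt μ)) (y₀ / Real.sqrt μ),
          Complex.exp (Complex.I * ((t * omegaWW μ ξ + x * ξ : ℝ) : ℂ))‖ ≤
        C * (μ * t) ^ (-(1:ℝ)/3) := by
  refine ⟨1 / 2, by norm_num, 44, by norm_num, fun μ hμ t ht x ↦ ?_⟩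
  set L := (1 / 2) / √μ
  have hL : 0 ≤ L := by positivity
  have hint : ∀ a b, IntervalIntegrable
      (fun ξ ↦ Complex.exp (Complex.I * ((t * omegaWW μ ξ + x * ξ : ℝ) : ℂ))) volume a b :=
    fun a b ↦ intervalIntegrable_cexp_I_mul (by fun_prop)
  have hreflect : ∫ ξ in -L..0, Complex.exp (Complex.I * ((t * omegaWW μ ξ + x * ξ : ℝ) : ℂ))
      = ∫ ξ in 0..L, Complex.exp (Complex.I * ((t * omegaWW μ ξ + -x * ξ : ℝ) : ℂ)) := by
    rw [← neg_zero, ← integral_comp_neg, neg_zero]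
    simp only [omegaWW_neg, mul_neg, neg_mul]
  rw [integral_Icc_eq_integral_Ioc, ← integral_of_le (by linarith),
    ← integral_add_adjacent_intervals (hint (-L) 0) (hint 0 L), hreflect]
  calc _ ≤ _ := norm_add_le _ _
    _ ≤ 22 * (μ * t) ^ (-(1:ℝ) / 3) + 22 * (μ * t) ^ (-(1:ℝ) / 3) :=
        add_le_add (norm_integral_cexp_omegaWW_le hμ ht (-x))
          (norm_integral_cexp_omegaWW_le hμ ht x)
    _ = 44 * (μ * t) ^ (-(1:ℝ) / 3) := by ring
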